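/- Let (L₁, L₂, P, (⊛ᵢ, ↙ⁱ, ↖ᵢ)_{i∈I}) be a multi-adjoint object-oriented frame, (X, Y, φ, τ) a context of this frame, and φ†, φ_† the associated operators. Then φ† ∘ φ_† is an interior (kernel) operator on Y → L₂: it is monotone, satisfies φ†(φ_† λ) ≤ λ pointwise for all λ : Y → L₂, and is idempotent. Moreover, the set Fix(φ†∘φ_†) = { λ : Y → L₂ ∣ φ†(φ_† λ) = λ }, ordered pointwise, is a complete lattice in which the supremum of a family (λⱼ)_{j∈J} is the pointwise supremum ⨆ⱼ λⱼ and the infimum is φ†(φ_†(⨅ⱼ λⱼ)). -/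

import Mathlib

/-! The adjoint triples make `φ†` a lower adjoint of `φ_†` between the pointwise-ordered
lattices `X → L₁` and `Y → L₂`, since both sides of `φ† μ ≤ λ` and `μ ≤ φ_† λ` unfold to
`μ x ⊛_{τ y} φ x y ≤ λ y` for all `x, y`. Every statement is then a general fact about
`l ∘ u` for a Galois connection `l ⊣ u`: it is monotone, deflationary and idempotent, and
a supremum of fixed points is fixed since `b j = l (u (b j)) ≤ l (u (⨆ b)) ≤ ⨆ b`. -/

theorem galoisConnection_iSup_iInf {X Y α β : Type*} [CompleteLattice α] [CompleteLattice β]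
    (l : X → Y → α → β) (u : X → Y → β → α) (h : ∀ x y, GaloisConnection (l x y) (u x y)) :
    GaloisConnection (fun (μ : X → α) y => ⨆ x, l x y (μ x))
      (fun (ν : Y → β) x => ⨅ y, u x y (ν y)) := by
  intro μ ν
  simp only [Pi.le_def, iSup_le_iff, le_iInf_iff, (h _ _).le_iff_le]
  exact forall_comm

namespace GaloisConnection

variable {α β : Type*} [CompleteLattice α] [CompleteLattice β] {l : α → β} {u : β → α}

theorem l_u_iSup_of_forall_l_u_eq (gc : GaloisConnection l u) {J : Type*} {b : J → β}
    (hb : ∀ j, l (u (b j)) = b j) : l (u (⨆ j, b j)) = ⨆ j, b j :=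
  (gc.l_u_le _).antisymm <| iSup_le fun j => hb j ▸ gc.monotone_l_comp_u (le_iSup b j)

theorem le_l_u_iInf_of_forall_le (gc : GaloisConnection l u) {J : Type*} {b : J → β} {c : β}
    (hc : l (u c) = c) (hcb : ∀ j, c ≤ b j) : c ≤ l (u (⨅ j, b j)) :=
  hc ▸ gc.monotone_l_comp_u (le_iInf hcb)

end GaloisConnection

/-- `φ† ∘ φ_†` is an interior (kernel) operator on `Y → L₂`, and
its fixed points form a complete lattice with pointwise suprema and with
infima given by the kernel of the pointwise infimum. -/
theorem stmt_15 {L₁ L₂ P : Type*} [CompleteLattice L₁] [CompleteLattice L₂]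
    [CompleteLattice P] {I : Type*}
    (w : I → L₁ → P → L₂) (ld : I → L₂ → P → L₁) (lu : I → L₂ → L₁ → P)
    (adj : ∀ (i : I) (x : L₁) (z : P) (y : L₂),
      (w i x z ≤ y ↔ x ≤ ld i y z) ∧ (w i x z ≤ y ↔ z ≤ lu i y x))
    {X Y : Type*} (φ : X → Y → P) (τ : Y → I)
    (dag : (X → L₁) → Y → L₂) (ldag : (Y → L₂) → X → L₁)
    (hdag : ∀ (μ : X → L₁) (y : Y), dag μ y = ⨆ x, w (τ y) (μ x) (φ x y))
    (hldag : ∀ (lam : Y → L₂) (x : X), ldag lam x = ⨅ y, ld (τ y) (lam y) (φ x y))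
    {J : Type*} (lam : J → Y → L₂) (hlam : ∀ j, dag (ldag (lam j)) = lam j) :
    -- `φ† ∘ φ_†` is an interior (kernel) operator
    (∀ lam₁ lam₂ : Y → L₂, lam₁ ≤ lam₂ → dag (ldag lam₁) ≤ dag (ldag lam₂)) ∧
    (∀ lam₀ : Y → L₂, dag (ldag lam₀) ≤ lam₀) ∧
    (∀ lam₀ : Y → L₂, dag (ldag (dag (ldag lam₀))) = dag (ldag lam₀)) ∧
    -- the pointwise supremum of fixed points is a fixed point ...
    dag (ldag (⨆ j, lam j)) = ⨆ j, lam j ∧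
    -- ... and is the least upper bound of the family among fixed points
    (∀ j, lam j ≤ ⨆ j, lam j) ∧
    (∀ ν : Y → L₂, dag (ldag ν) = ν → (∀ j, lam j ≤ ν) → (⨆ j, lam j) ≤ ν) ∧
    -- the kernel of the pointwise infimum is a fixed point ...
    dag (ldag (dag (ldag (⨅ j, lam j)))) = dag (ldag (⨅ j, lam j)) ∧
    -- ... and is the greatest lower bound of the family among fixed points
    (∀ j, dag (ldag (⨅ j, lam j)) ≤ lam j) ∧
    (∀ ν : Y → L₂, dag (ldag ν) = ν → (∀ j, ν ≤ lam j) →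
      ν ≤ dag (ldag (⨅ j, lam j))) := by
  have gc : GaloisConnection dag ldag := by
    rw [show dag = _ from funext₂ hdag, show ldag = _ from funext₂ hldag]
    exact galoisConnection_iSup_iInf (fun x y a => w (τ y) a (φ x y))
      (fun x y b => ld (τ y) b (φ x y)) fun x y a b => (adj (τ y) a (φ x y) b).1
  refine ⟨fun _ _ => gc.monotone_l_comp_u.imp, gc.l_u_le, fun _ => gc.l_u_l_eq_l _,
    gc.l_u_iSup_of_forall_l_u_eq hlam, le_iSup lam, fun _ _ => iSup_le, gc.l_u_l_eq_l _,
    fun j => (gc.l_u_le _).trans (iInf_le lam j), fun _ => gc.le_l_u_iInf_of_forall_le⟩
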